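/- Let G be a triorthogonal matrix obtained by puncturing a triorthogonal subspace: if G̃ = [I_m | P] is in reduced row echelon form with row span a triorthogonal subspace, and P is split as P_T (first k_T rows) and P_0 (remaining k_0 rows), then the matrix [[0, P_T],[I_{k_0}, P_0]] is triorthogonal, with the first k_T rows having odd weight and the last k_0 rows having even weight. -/

import Mathlib

/-- Rows of the pre-puncture matrix `G̃ = [I_m | P]` in reduced row echelon form,
with `m = kT + k0` rows, where row `a` is the `a`-th standard basis vector on the
first `m` coordinates followed by row `a` of `P`. -/
def fullRow {kT k0 n' : ℕ} (P : Matrix (Fin kT ⊕ Fin k0) (Fin n') (ZMod 2)) :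
    Fin kT ⊕ Fin k0 → ((Fin kT ⊕ Fin k0) ⊕ Fin n') → ZMod 2 :=
  fun a j => match j with
    | Sum.inl b => if a = b then 1 else 0
    | Sum.inr j' => P a j'

/-- Rows of the punctured matrix `[[0, P_T],[I_{k0}, P_0]]`, obtained from `[I_m | P]`
by deleting the first `kT` columns. -/
def punctRow {kT k0 n' : ℕ} (P : Matrix (Fin kT ⊕ Fin k0) (Fin n') (ZMod 2)) :
    Fin kT ⊕ Fin k0 → (Fin k0 ⊕ Fin n') → ZMod 2 :=
  fun a j => match j with
    | Sum.inl b => if a = Sum.inr b then 1 else 0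
    | Sum.inr j' => P a j'

/-!
Puncturing deletes the first `kT` coordinates, on which the rows of `[I_m | P]` are distinct unit
vectors. Hence a product of two or three distinct rows vanishes there and puncturing does not
change its weight, while a single row loses weight `1` if it is one of the first `kT` rows and `0`
otherwise. Since `x * x = x` over `𝔽₂`, weights of single rows and of pairwise products are weights
of triple products of rows of `[I_m | P]`, which are even by triorthogonality.
-/

open Finset

lemma mul_self_eq_self_of_zmod_two {ι : Type*} (x : ι → ZMod 2) : x * x = x :=
  funext fun j => by simpa [sq] using ZMod.pow_card (x j)

section Weight

variable {ι α β γ : Type*} [Fintype ι] [Fintype α] [Fintype β] [Fintype γ]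

/-- Hamming weight over `𝔽₂`, written as the count `#{j | x j = 1}` of `punctured_triorthogonal`
rather than as `hammingNorm`, so that its hypotheses and goals unfold to it definitionally. -/
def weight (x : ι → ZMod 2) : ℕ := #{j | x j = 1}

@[simp] lemma weight_zero : weight (0 : ι → ZMod 2) = 0 := by
  simp [weight]

@[simp] lemma weight_single [DecidableEq ι] (i : ι) :
    weight (Pi.single i 1 : ι → ZMod 2) = 1 := by
  rw [weight, card_eq_one]
  exact ⟨i, by ext j; by_cases h : j = i <;> simp [h]⟩

lemma weight_sum (x : α ⊕ β → ZMod 2) :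
    weight x = weight (x ∘ Sum.inl) + weight (x ∘ Sum.inr) := by
  simp only [weight, ← card_toLeft_add_card_toRight]
  congr 2 <;> ext <;> simp

lemma weight_split_inl_inl (x : (α ⊕ β) ⊕ γ → ZMod 2) :
    weight x = weight (x ∘ Sum.inl ∘ Sum.inl) + weight (x ∘ Sum.map Sum.inr id) := by
  rw [weight_sum x, weight_sum (x ∘ Sum.inl), weight_sum (x ∘ Sum.map Sum.inr id), add_assoc]
  rfl

end Weight

section Puncture

variable {kT k0 n' : ℕ} (P : Matrix (Fin kT ⊕ Fin k0) (Fin n') (ZMod 2))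

lemma fullRow_comp_map (a : Fin kT ⊕ Fin k0) :
    fullRow P a ∘ Sum.map Sum.inr id = punctRow P a := by
  funext j; rcases j with j | j <;> rfl

lemma weight_fullRow_mul_mul_of_ne {a b : Fin kT ⊕ Fin k0} (hab : a ≠ b) (c : Fin kT ⊕ Fin k0) :
    weight (fullRow P a * fullRow P b * fullRow P c) =
      weight (punctRow P a * punctRow P b * punctRow P c) := by
  have hdel : (fullRow P a * fullRow P b * fullRow P c) ∘ Sum.inl ∘ Sum.inl = 0 := by
    funext t
    by_cases ha : a = Sum.inl t
    · subst ha
      simp [fullRow, hab.symm]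
    · simp [fullRow, ha]
  rw [weight_split_inl_inl, hdel, weight_zero, zero_add]
  simp only [← fullRow_comp_map, Pi.mul_comp]

lemma weight_fullRow_inl (t : Fin kT) :
    weight (fullRow P (Sum.inl t)) = weight (punctRow P (Sum.inl t)) + 1 := by
  have hdel : fullRow P (Sum.inl t) ∘ Sum.inl ∘ Sum.inl = Pi.single t 1 := by
    funext s
    simp [fullRow, Pi.single_apply, eq_comm]
  rw [weight_split_inl_inl, hdel, weight_single, fullRow_comp_map, add_comm]

lemma weight_fullRow_inr (t : Fin k0) :
    weight (fullRow P (Sum.inr t)) = weight (punctRow P (Sum.inr t)) := by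
  have hdel : fullRow P (Sum.inr t) ∘ Sum.inl ∘ Sum.inl = 0 := by
    funext s
    simp [fullRow]
  rw [weight_split_inl_inl, hdel, weight_zero, fullRow_comp_map, zero_add]

end Puncture

/-- Puncturing a triorthogonal subspace: if the row span of `[I_m | P]` is a
triorthogonal subspace, then the punctured matrix `[[0,P_T],[I_{k0},P_0]]` is
triorthogonal, with first `kT` rows of odd weight and last `k0` rows of even weight. -/
theorem punctured_triorthogonal {kT k0 n' : ℕ}
    (P : Matrix (Fin kT ⊕ Fin k0) (Fin n') (ZMod 2))
    (htrio : ∀ u ∈ Submodule.span (ZMod 2) (Set.range (fullRow P)),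
             ∀ v ∈ Submodule.span (ZMod 2) (Set.range (fullRow P)),
             ∀ w ∈ Submodule.span (ZMod 2) (Set.range (fullRow P)),
      Even ((Finset.univ.filter (fun j => u j * v j * w j = 1)).card)) :
    (∀ a b : Fin kT ⊕ Fin k0, a ≠ b →
      Even ((Finset.univ.filter (fun j => punctRow P a j * punctRow P b j = 1)).card)) ∧
    (∀ a b c : Fin kT ⊕ Fin k0, a ≠ b → a ≠ c → b ≠ c →
      Even ((Finset.univ.filter
        (fun j => punctRow P a j * punctRow P b j * punctRow P c j = 1)).card)) ∧
    (∀ a : Fin kT,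
      Odd ((Finset.univ.filter (fun j => punctRow P (Sum.inl a) j = 1)).card)) ∧
    (∀ a : Fin k0,
      Even ((Finset.univ.filter (fun j => punctRow P (Sum.inr a) j = 1)).card)) := by
  have hfull (a b c) : Even (weight (fullRow P a * fullRow P b * fullRow P c)) :=
    htrio _ (Submodule.subset_span ⟨a, rfl⟩) _ (Submodule.subset_span ⟨b, rfl⟩)
      _ (Submodule.subset_span ⟨c, rfl⟩)
  have hrow (a) : Even (weight (fullRow P a)) := by
    simpa only [mul_self_eq_self_of_zmod_two] using hfull a a a
  refine ⟨fun a b hab => ?_, fun a b c hab _ _ => ?_, fun t => ?_, fun t => ?_⟩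
  · have h := hfull a b b
    rwa [weight_fullRow_mul_mul_of_ne P hab, mul_assoc, mul_self_eq_self_of_zmod_two] at h
  · have h := hfull a b c
    rwa [weight_fullRow_mul_mul_of_ne P hab] at h
  · have h := hrow (Sum.inl t)
    rw [weight_fullRow_inl, Nat.even_add_one] at h
    exact Nat.not_even_iff_odd.mp h
  · have h := hrow (Sum.inr t)
    rwa [weight_fullRow_inr] at h
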